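/- arXiv:2503.23203 — 2 statements merged into one kernel-verified Lean document; each statement's English description precedes it below -/
import Mathlib

section
/- Let G be a non-Hausdorff ample groupoid. Then J ∩ 𝒞_c(G) = {0} if and only if J_ℂ = {0}, where J is the singular ideal of C*_r(G) and J_ℂ is the singular ideal of the complex Steinberg algebra ℂG. -/
/-! Basic framework: (possibly non-Hausdorff) topological groupoids, open bisections,
the convolution algebra `𝒞_c(G)`. -/

/-- The data of a topological groupoid on a topological space `G`:
unit space `X ⊆ G`, range and source maps `r, s : G → G` (with values in `X`),
inversion and a (partial, defined on composable pairs) multiplication, all continuous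
(multiplication on the set of composable pairs), satisfying the groupoid axioms. -/
structure GroupoidData (G : Type) [TopologicalSpace G] : Type where
  X : Set G
  r : G → G
  s : G → G
  inv : G → G
  mul : G → G → G
  r_mem : ∀ g, r g ∈ X
  s_mem : ∀ g, s g ∈ X
  r_unit : ∀ x ∈ X, r x = x
  s_unit : ∀ x ∈ X, s x = x
  continuous_r : Continuous r
  continuous_s : Continuous s
  continuous_inv : Continuous inv
  continuousOn_mul : ContinuousOn (fun p : G × G => mul p.1 p.2) {p : G × G | s p.1 = r p.2}
  r_inv : ∀ g, r (inv g) = s g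
  s_inv : ∀ g, s (inv g) = r g
  inv_inv : ∀ g, inv (inv g) = g
  r_mul : ∀ g h, s g = r h → r (mul g h) = r g
  s_mul : ∀ g h, s g = r h → s (mul g h) = s h
  mul_assoc : ∀ g h k, s g = r h → s h = r k → mul (mul g h) k = mul g (mul h k)
  mul_inv : ∀ g, mul g (inv g) = r g
  inv_mul : ∀ g, mul (inv g) g = s g
  mul_unit : ∀ g, mul g (s g) = g
  unit_mul : ∀ g, mul (r g) g = g

variable {G : Type} [TopologicalSpace G]

/-- An open bisection: an open set on which both `r` and `s` are injective and restrict to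
open maps (hence homeomorphisms onto open subsets of the unit space). -/
def GroupoidData.IsOpenBisection (D : GroupoidData G) (U : Set G) : Prop :=
  IsOpen U ∧ Set.InjOn D.r U ∧ Set.InjOn D.s U ∧
    (∀ V ⊆ U, IsOpen V → IsOpen (D.r '' V)) ∧ (∀ V ⊆ U, IsOpen V → IsOpen (D.s '' V))

/-- The groupoid is étale: it is covered by open bisections. -/
def GroupoidData.IsEtale (D : GroupoidData G) : Prop :=
  ∀ g : G, ∃ U : Set G, D.IsOpenBisection U ∧ g ∈ U

/-- `f : G → ℂ` is (the extension by zero of) a continuous compactly supported function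
on the open set `U`. -/
def MemCc (U : Set G) (f : G → ℂ) : Prop :=
  ContinuousOn f U ∧ (∀ g ∉ U, f g = 0) ∧
    ∃ K : Set G, IsCompact K ∧ K ⊆ U ∧ ∀ g, f g ≠ 0 → g ∈ K

/-- The convolution algebra `𝒞_c(G)`, as a linear subspace of functions `G → ℂ`:
the span of the `C_c(U)` over all open bisections `U`. -/
noncomputable def GroupoidData.CcSpan (D : GroupoidData G) : Submodule ℂ (G → ℂ) :=
  Submodule.span ℂ {f : G → ℂ | ∃ U : Set G, D.IsOpenBisection U ∧ MemCc U f}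

/-- The Steinberg algebra `RG` (as an additive subgroup of functions `G → R`): the span of the
functions `c_U` taking a constant value `c ∈ R` on a compact open bisection `U` and `0`
elsewhere. -/
def GroupoidData.Steinberg (D : GroupoidData G) (R : Type) [NonUnitalRing R] :
    AddSubgroup (G → R) :=
  AddSubgroup.closure {f : G → R | ∃ (c : R) (U : Set G),
    IsCompact U ∧ D.IsOpenBisection U ∧ f = Set.indicator U (fun _ => c)}


open Filter Topology Set


/-- Nowhere dense set. -/
def Nwd (A : Set G) : Prop := interior (closure A) = ∅

lemma Nwd.mono {A B : Set G} (h : Nwd B) (hAB : A ⊆ B) : Nwd A := by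
  have := interior_mono (closure_mono hAB)
  rw [h] at this
  exact eq_empty_of_subset_empty this

lemma Nwd.interior_eq_empty {A : Set G} (h : Nwd A) : interior A = ∅ :=
  eq_empty_of_subset_empty (h ▸ interior_mono subset_closure)

lemma nwd_iff_open_subset {A : Set G} :
    Nwd A ↔ ∀ O : Set G, IsOpen O → O ⊆ closure A → O = ∅ := by
  constructor
  · intro h O hO hsub
    have : O ⊆ interior (closure A) := hO.subset_interior_iff.mpr hsub
    rw [h] at this; exact eq_empty_of_subset_empty this
  · intro h
    exact h _ isOpen_interior interior_subset

lemma open_subset_closure_meets {A O : Set G} (hO : IsOpen O) (hsub : O ⊆ closure A)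
    (hne : O.Nonempty) : (O ∩ A).Nonempty := by
  obtain ⟨x, hx⟩ := hne
  have := mem_closure_iff.mp (hsub hx) O hO hx
  exact this

lemma Nwd.union {A B : Set G} (hA : Nwd A) (hB : Nwd B) : Nwd (A ∪ B) := by
  rw [nwd_iff_open_subset]
  intro O hO hsub
  rw [closure_union] at hsub
  by_contra hne
  rw [← Ne, ← nonempty_iff_ne_empty] at hne
  have h1 : O \ closure A ⊆ closure B := fun x hx =>
    (hsub hx.1).resolve_left hx.2
  have h1' : O \ closure A = ∅ := by
    rw [nwd_iff_open_subset] at hB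
    exact hB _ (hO.sdiff isClosed_closure) h1
  have h2 : O ⊆ closure A := by
    intro x hx
    by_contra hc
    have : x ∈ O \ closure A := ⟨hx, hc⟩
    rw [h1'] at this
    exact this
  rw [nwd_iff_open_subset] at hA
  exact hne.ne_empty (hA _ hO h2)

lemma nwd_empty : Nwd (∅ : Set G) := by
  simp [Nwd]

lemma Nwd.biUnion {ι : Type*} (s : Finset ι) (A : ι → Set G) (h : ∀ i ∈ s, Nwd (A i)) :
    Nwd (⋃ i ∈ s, A i) := by
  classical
  induction s using Finset.induction_on with
  | empty => simpa using nwd_empty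
  | @insert a t hat ih =>
    rw [Finset.set_biUnion_insert]
    exact (h a (Finset.mem_insert_self a t)).union
      (ih fun i hi => h i (Finset.mem_insert_of_mem hi))

lemma Nwd.iUnion_fin {ι : Type*} [Fintype ι] (A : ι → Set G) (h : ∀ i, Nwd (A i)) :
    Nwd (⋃ i, A i) := by
  classical
  have : (⋃ i, A i) = ⋃ i ∈ (Finset.univ : Finset ι), A i := by simp
  rw [this]
  exact Nwd.biUnion _ _ fun i _ => h i

lemma nwd_frontier_of_open {U : Set G} (hU : IsOpen U) : Nwd (frontier U) := by
  rw [nwd_iff_open_subset]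
  intro O hO hsub
  rw [closure_eq_iff_isClosed.mpr isClosed_frontier] at hsub
  by_contra hne
  rw [← Ne, ← nonempty_iff_ne_empty] at hne
  have hOP : O ⊆ closure U := fun x hx => (hsub hx).1
  obtain ⟨x, hxO, hxU⟩ := open_subset_closure_meets hO hOP hne
  exact (hsub hxO).2 (by rw [hU.interior_eq]; exact hxU)

/-- On an open set, a continuous function vanishing on a dense subset vanishes. -/
lemma eqzero_of_dense {c : Set G} {D : Set G} {ψ : G → ℂ} (hc : IsOpen c)
    (hψ : ContinuousOn ψ c) (hD : Dense D) (h0 : ∀ y ∈ c ∩ D, ψ y = 0) :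
    ∀ y ∈ c, ψ y = 0 := by
  intro y hy
  have hat : ContinuousAt ψ y := hψ.continuousAt (hc.mem_nhds hy)
  have hne : (𝓝[c ∩ D] y).NeBot := by
    rw [← mem_closure_iff_nhdsWithin_neBot, mem_closure_iff]
    intro O hO hyO
    obtain ⟨z, hz⟩ := hD.inter_open_nonempty (O ∩ c) (hO.inter hc) ⟨y, hyO, hy⟩
    exact ⟨z, hz.1.1, hz.1.2, hz.2⟩
  have t1 : Tendsto ψ (𝓝[c ∩ D] y) (𝓝 (ψ y)) :=
    hat.tendsto.mono_left nhdsWithin_le_nhds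
  have t2 : Tendsto ψ (𝓝[c ∩ D] y) (𝓝 0) := by
    apply Tendsto.congr' _ tendsto_const_nhds
    filter_upwards [self_mem_nhdsWithin] with z hz
    exact (h0 z ⟨hz.1, hz.2⟩).symm
  exact tendsto_nhds_unique t1 t2

section GD
variable (D : GroupoidData G)

lemma GD_eq_of_t2 [T2Space ↥D.X] {a b : G} (ha : a ∈ D.X) (hb : b ∈ D.X)
    (h : (𝓝 a ⊓ 𝓝 b ⊓ 𝓟 D.X).NeBot) : a = b := by
  by_contra hne
  obtain ⟨u, v, hu, hv, hau, hbv, huv⟩ :=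
    t2_separation (show (⟨a, ha⟩ : ↥D.X) ≠ ⟨b, hb⟩ from fun he => hne (congrArg Subtype.val he))
  obtain ⟨W₁, hW₁, hW₁e⟩ := isOpen_induced_iff.mp hu
  obtain ⟨W₂, hW₂, hW₂e⟩ := isOpen_induced_iff.mp hv
  have haW : a ∈ W₁ := by rw [← hW₁e] at hau; exact hau
  have hbW : b ∈ W₂ := by rw [← hW₂e] at hbv; exact hbv
  have hmem : W₁ ∩ W₂ ∩ D.X ∈ 𝓝 a ⊓ 𝓝 b ⊓ 𝓟 D.X := by
    exact inter_mem_inf (inter_mem_inf (hW₁.mem_nhds haW) (hW₂.mem_nhds hbW))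
      (mem_principal_self _)
  obtain ⟨z, ⟨hz1, hz2⟩, hzX⟩ := h.nonempty_of_mem hmem
  have : (⟨z, hzX⟩ : ↥D.X) ∈ u ∩ v := by
    constructor
    · rw [← hW₁e]; exact hz1
    · rw [← hW₂e]; exact hz2
  exact absurd this (by rw [Set.disjoint_iff_inter_eq_empty.mp huv]; exact fun h => h)

lemma GD_exists_compact_open [LocallyCompactSpace G] [T2Space ↥D.X]
    [TotallyDisconnectedSpace ↥D.X] (hXopen : IsOpen D.X) {V : Set G} (hV : IsOpen V)
    (hVX : V ⊆ D.X) {x : G} (hx : x ∈ V) :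
    ∃ K : Set G, IsCompact K ∧ IsOpen K ∧ x ∈ K ∧ K ⊆ V := by
  haveI : LocallyCompactSpace ↥D.X := hXopen.locallyCompactSpace
  set S := ↥D.X
  have hVS : IsOpen (Subtype.val ⁻¹' V : Set S) := isOpen_induced_iff.mpr ⟨V, hV, rfl⟩
  have hxS : (⟨x, hVX hx⟩ : S) ∈ (Subtype.val ⁻¹' V : Set S) := hx
  obtain ⟨s, hscomp, hxint, hsV⟩ := exists_compact_subset hVS hxS
  have hbasis := @loc_compact_Haus_tot_disc_of_zero_dim S _ _ _ _
  obtain ⟨C, hC, hxC, hCint⟩ := hbasis.mem_nhds_iff.mp (isOpen_interior.mem_nhds hxint)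
  have hCclopen : IsClopen C := hC
  have hCcomp : IsCompact C := by
    have : C = s ∩ C := by
      rw [inter_eq_self_of_subset_right (hCint.trans interior_subset)]
    rw [this]
    exact hscomp.inter_right hCclopen.1
  refine ⟨Subtype.val '' C, hCcomp.image continuous_subtype_val,
    hXopen.isOpenMap_subtype_val _ hCclopen.2, ⟨⟨x, hVX hx⟩, hxC, rfl⟩, ?_⟩
  rintro _ ⟨z, hz, rfl⟩
  exact hsV (interior_subset (hCint hz))

end GD

section SEC
variable (D : GroupoidData G)

open Classical in
noncomputable def GDsec (U : Set G) (x : G) : G :=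
  if h : ∃ g, g ∈ U ∧ D.s g = x then h.choose else x

lemma GDsec_spec {U : Set G} {x : G} (hx : x ∈ D.s '' U) :
    GDsec D U x ∈ U ∧ D.s (GDsec D U x) = x := by
  obtain ⟨g, hg, rfl⟩ := hx
  have h : ∃ g', g' ∈ U ∧ D.s g' = D.s g := ⟨g, hg, rfl⟩
  rw [GDsec]
  rw [dif_pos h]
  exact h.choose_spec

lemma GDsec_of_mem {U : Set G} (hU : Set.InjOn D.s U) {g : G} (hg : g ∈ U) :
    GDsec D U (D.s g) = g := by
  have h := GDsec_spec D (⟨g, hg, rfl⟩ : D.s g ∈ D.s '' U)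
  exact hU h.1 hg h.2

lemma bis_open {U : Set G} (hB : D.IsOpenBisection U) : IsOpen U := hB.1

lemma bis_injOn_s {U : Set G} (hB : D.IsOpenBisection U) : Set.InjOn D.s U := hB.2.2.1

lemma bis_s_open {U : Set G} (hB : D.IsOpenBisection U) {V : Set G} (hVU : V ⊆ U)
    (hV : IsOpen V) : IsOpen (D.s '' V) := hB.2.2.2.2 V hVU hV

lemma bis_sub {U W : Set G} (hB : D.IsOpenBisection U) (hWU : W ⊆ U) (hW : IsOpen W) :
    D.IsOpenBisection W :=
  ⟨hW, hB.2.1.mono hWU, hB.2.2.1.mono hWU,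
    fun V hV hVo => hB.2.2.2.1 V (hV.trans hWU) hVo,
    fun V hV hVo => hB.2.2.2.2 V (hV.trans hWU) hVo⟩

lemma bis_sImage_open {U : Set G} (hB : D.IsOpenBisection U) : IsOpen (D.s '' U) :=
  bis_s_open D hB subset_rfl hB.1

lemma GDsec_continuousOn {U : Set G} (hB : D.IsOpenBisection U) :
    ContinuousOn (GDsec D U) (D.s '' U) := by
  rw [continuousOn_iff]
  intro x hx t ht hmem
  refine ⟨D.s '' (t ∩ U), bis_s_open D hB inter_subset_right (ht.inter (bis_open D hB)), ?_, ?_⟩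
  · exact ⟨GDsec D U x, ⟨hmem, (GDsec_spec D hx).1⟩, (GDsec_spec D hx).2⟩
  · rintro y ⟨⟨g, ⟨hgt, hgU⟩, rfl⟩, _⟩
    have : GDsec D U (D.s g) = g := GDsec_of_mem D (bis_injOn_s D hB) hgU
    simpa [Set.mem_preimage, this] using hgt

lemma GDsec_image {U : Set G} (hB : D.IsOpenBisection U) {K : Set G} (hK : K ⊆ D.s '' U) :
    GDsec D U '' K = U ∩ D.s ⁻¹' K := by
  ext g
  constructor
  · rintro ⟨x, hxK, rfl⟩
    have h := GDsec_spec D (hK hxK)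
    exact ⟨h.1, by rw [Set.mem_preimage, h.2]; exact hxK⟩
  · rintro ⟨hgU, hgs⟩
    exact ⟨D.s g, hgs, GDsec_of_mem D (bis_injOn_s D hB) hgU⟩

lemma coSet_open {U U' : Set G} (hB : D.IsOpenBisection U) (hB' : D.IsOpenBisection U') :
    IsOpen (D.s '' (U ∩ U')) :=
  bis_s_open D hB inter_subset_left ((bis_open D hB).inter (bis_open D hB'))

lemma mem_coSet_iff {U U' : Set G} (hB : D.IsOpenBisection U) (hB' : D.IsOpenBisection U')
    {y : G} : y ∈ D.s '' (U ∩ U') ↔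
      y ∈ D.s '' U ∧ y ∈ D.s '' U' ∧ GDsec D U y = GDsec D U' y := by
  constructor
  · rintro ⟨g, ⟨hgU, hgU'⟩, rfl⟩
    exact ⟨⟨g, hgU, rfl⟩, ⟨g, hgU', rfl⟩, by
      rw [GDsec_of_mem D (bis_injOn_s D hB) hgU, GDsec_of_mem D (bis_injOn_s D hB') hgU']⟩
  · rintro ⟨hy, hy', he⟩
    refine ⟨GDsec D U y, ⟨(GDsec_spec D hy).1, ?_⟩, (GDsec_spec D hy).2⟩
    rw [he]; exact (GDsec_spec D hy').1

lemma nwd_s_image {U : Set G} (hB : D.IsOpenBisection U) {B : Set G} (hBU : B ⊆ U)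
    (h : Nwd B) : Nwd (D.s '' B) := by
  rw [nwd_iff_open_subset]
  intro O hO hsub
  by_contra hne
  rw [← Ne, ← nonempty_iff_ne_empty] at hne
  obtain ⟨z, hzO, b, hbB, rfl⟩ := open_subset_closure_meets hO hsub hne
  have hP : b ∈ U ∩ D.s ⁻¹' O := ⟨hBU hbB, hzO⟩
  have hPo : IsOpen (U ∩ D.s ⁻¹' O) := (bis_open D hB).inter (hO.preimage D.continuous_s)
  have hPsub : U ∩ D.s ⁻¹' O ⊆ closure B := by
    intro p hp
    rw [mem_closure_iff]
    intro N hN hpN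
    have hNP : IsOpen (N ∩ (U ∩ D.s ⁻¹' O)) := hN.inter hPo
    have hNPU : N ∩ (U ∩ D.s ⁻¹' O) ⊆ U := fun w hw => hw.2.1
    have hso : IsOpen (D.s '' (N ∩ (U ∩ D.s ⁻¹' O))) := bis_s_open D hB hNPU hNP
    have hsp : D.s p ∈ D.s '' (N ∩ (U ∩ D.s ⁻¹' O)) := ⟨p, ⟨hpN, hp⟩, rfl⟩
    have hspc : D.s p ∈ closure (D.s '' B) := hsub hp.2
    obtain ⟨w, hw1, hw2⟩ := mem_closure_iff.mp hspc _ hso hsp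
    obtain ⟨u, hu, hueq⟩ := hw1
    obtain ⟨b', hb', hbeq⟩ := hw2
    have : u = b' := bis_injOn_s D hB hu.2.1 (hBU hb') (by rw [hueq, hbeq])
    exact ⟨u, hu.1, this ▸ hb'⟩
  rw [nwd_iff_open_subset] at h
  have := h _ hPo hPsub
  rw [this] at hP
  exact hP

lemma nwd_of_s_image {U : Set G} (hB : D.IsOpenBisection U) {A : Set G} (hAU : A ⊆ U)
    (h : Nwd (D.s '' A)) : Nwd A := by
  rw [nwd_iff_open_subset]
  intro O hO hsub
  by_contra hne
  rw [← Ne, ← nonempty_iff_ne_empty] at hne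
  obtain ⟨a, haO, haA⟩ := open_subset_closure_meets hO hsub hne
  have hO' : IsOpen (O ∩ U) := hO.inter (bis_open D hB)
  have hso : IsOpen (D.s '' (O ∩ U)) := bis_s_open D hB inter_subset_right hO'
  have hsubc : D.s '' (O ∩ U) ⊆ closure (D.s '' A) := by
    rintro _ ⟨t, ht, rfl⟩
    exact image_closure_subset_closure_image D.continuous_s ⟨t, hsub ht.1, rfl⟩
  rw [nwd_iff_open_subset] at h
  have := h _ hso hsubc
  have : D.s a ∈ (∅ : Set G) := this ▸ ⟨a, ⟨haO, hAU haA⟩, rfl⟩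
  exact this

end SEC

section REP
variable (D : GroupoidData G)

lemma memCc_smul {U : Set G} {f : G → ℂ} (c : ℂ) (h : MemCc U f) : MemCc U (c • f) := by
  obtain ⟨hcont, hzero, K, hKc, hKU, hKsupp⟩ := h
  refine ⟨(hcont.const_smul c : ContinuousOn (fun x => c • f x) U),
    fun g hg => by simp [hzero g hg], K, hKc, hKU, ?_⟩
  intro g hg
  apply hKsupp
  intro h0
  simp [h0] at hg

lemma ccSpan_rep {f : G → ℂ} (hf : f ∈ D.CcSpan) :
    ∃ (n : ℕ) (U : Fin n → Set G) (fi : Fin n → G → ℂ),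
      (∀ i, D.IsOpenBisection (U i)) ∧ (∀ i, MemCc (U i) (fi i)) ∧
      ∀ g, f g = ∑ i, fi i g := by
  induction hf using Submodule.span_induction with
  | mem x hx =>
    obtain ⟨U, hU, hMem⟩ := hx
    exact ⟨1, fun _ => U, fun _ => x, fun _ => hU, fun _ => hMem,
      fun g => by simp⟩
  | zero => exact ⟨0, Fin.elim0, Fin.elim0, fun i => i.elim0, fun i => i.elim0, fun g => by simp⟩
  | add x y hx hy ihx ihy =>
    obtain ⟨n, U, fi, hU, hMem, hsum⟩ := ihx
    obtain ⟨m, V, gi, hV, hMem', hsum'⟩ := ihy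
    refine ⟨n + m, Fin.addCases U V, Fin.addCases fi gi, ?_, ?_, ?_⟩
    · intro i
      refine Fin.addCases (fun j => by simpa using hU j) (fun j => by simpa using hV j) i
    · intro i
      refine Fin.addCases (fun j => by simpa using hMem j) (fun j => by simpa using hMem' j) i
    · intro g
      rw [Fin.sum_univ_add]
      simp only [Fin.addCases_left, Fin.addCases_right]
      rw [Pi.add_apply, hsum g, hsum' g]
  | smul c x hx ihx =>
    obtain ⟨n, U, fi, hU, hMem, hsum⟩ := ihx
    refine ⟨n, U, fun i => c • fi i, hU, fun i => memCc_smul (c := c) (hMem i), fun g => ?_⟩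
    rw [Pi.smul_apply, hsum g, Finset.smul_sum]
    rfl

lemma steinberg_rep {f : G → ℂ} (hf : f ∈ D.Steinberg ℂ) :
    ∃ (n : ℕ) (c : Fin n → ℂ) (K : Fin n → Set G),
      (∀ i, IsCompact (K i) ∧ D.IsOpenBisection (K i)) ∧
      ∀ g, f g = ∑ i, Set.indicator (K i) (fun _ => c i) g := by
  induction hf using AddSubgroup.closure_induction with
  | mem x hx =>
    obtain ⟨c, U, hUc, hUb, rfl⟩ := hx
    exact ⟨1, fun _ => c, fun _ => U, fun _ => ⟨hUc, hUb⟩, fun g => by simp⟩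
  | zero => exact ⟨0, Fin.elim0, Fin.elim0, fun i => i.elim0, fun g => by simp⟩
  | add x y hx hy ihx ihy =>
    obtain ⟨n, c, K, hK, hsum⟩ := ihx
    obtain ⟨m, c', K', hK', hsum'⟩ := ihy
    refine ⟨n + m, Fin.addCases c c', Fin.addCases K K', ?_, fun g => ?_⟩
    · intro i
      refine Fin.addCases (fun j => by simpa using hK j) (fun j => by simpa using hK' j) i
    · rw [Fin.sum_univ_add]
      have e1 : ∀ j : Fin n, Set.indicator (Fin.addCases (motive := fun _ => Set G) K K' (Fin.castAdd m j))
          (fun _ => Fin.addCases (motive := fun _ => ℂ) c c' (Fin.castAdd m j)) g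
          = Set.indicator (K j) (fun _ => c j) g := by
        intro j; simp
      have e2 : ∀ j : Fin m, Set.indicator (Fin.addCases (motive := fun _ => Set G) K K' (Fin.natAdd n j))
          (fun _ => Fin.addCases (motive := fun _ => ℂ) c c' (Fin.natAdd n j)) g
          = Set.indicator (K' j) (fun _ => c' j) g := by
        intro j; simp
      rw [Finset.sum_congr rfl (fun j _ => e1 j), Finset.sum_congr rfl (fun j _ => e2 j)]
      rw [Pi.add_apply, hsum g, hsum' g]
  | neg x hx ihx =>
    obtain ⟨n, c, K, hK, hsum⟩ := ihx
    refine ⟨n, fun i => -c i, K, hK, fun g => ?_⟩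
    rw [Pi.neg_apply, hsum g, ← Finset.sum_neg_distrib]
    refine Finset.sum_congr rfl fun i _ => ?_
    by_cases hg : g ∈ K i <;> simp [hg]

end REP

section FORWARD
variable (D : GroupoidData G)

lemma indicator_memCc {c : ℂ} {U : Set G} (hUc : IsCompact U) (hUb : D.IsOpenBisection U) :
    MemCc U (Set.indicator U fun _ => c) := by
  refine ⟨continuousOn_const.congr fun y hy => Set.indicator_of_mem hy _,
    fun g hg => Set.indicator_of_notMem hg _, U, hUc, subset_rfl, fun g hg => ?_⟩
  by_contra hgU
  exact hg (Set.indicator_of_notMem hgU _)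

lemma steinberg_le_ccSpan {f : G → ℂ} (hf : f ∈ D.Steinberg ℂ) : f ∈ D.CcSpan := by
  have : D.Steinberg ℂ ≤ (D.CcSpan).toAddSubgroup := by
    rw [GroupoidData.Steinberg, AddSubgroup.closure_le]
    rintro x ⟨c, U, hUc, hUb, rfl⟩
    exact Submodule.subset_span ⟨U, hUb, indicator_memCc D hUc hUb⟩
  exact this hf

lemma dir_forward
    (hL : ∀ f : G → ℂ, f ∈ D.CcSpan → interior (D.s '' {g : G | f g ≠ 0}) = ∅ → f = 0)
    (f : G → ℂ) (hf : f ∈ D.Steinberg ℂ) (hint : interior {g : G | f g ≠ 0} = ∅) : f = 0 := by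
  classical
  obtain ⟨n, c, K, hK, hsum⟩ := steinberg_rep D hf
  set A := {g : G | f g ≠ 0} with hA
  set Bd := ⋃ i, frontier (K i) with hBd
  have hBdnwd : Nwd Bd := Nwd.iUnion_fin _ fun i => nwd_frontier_of_open (hK i).2.1
  have hBdcl : IsClosed Bd := isClosed_iUnion_of_finite fun i => isClosed_frontier
  -- local constancy off Bd
  have hloc : ∀ y ∉ Bd, ∃ N : Set G, IsOpen N ∧ y ∈ N ∧ ∀ z ∈ N, f z = f y := by
    intro y hy
    have hiff : ∀ i : Fin n, ∃ Ni : Set G, IsOpen Ni ∧ y ∈ Ni ∧ ∀ z ∈ Ni, (z ∈ K i ↔ y ∈ K i) := by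
      intro i
      have hyf : y ∉ frontier (K i) := fun h => hy (Set.mem_iUnion.mpr ⟨i, h⟩)
      by_cases hyK : y ∈ K i
      · exact ⟨K i, (hK i).2.1, hyK, fun z hz => iff_of_true hz hyK⟩
      · refine ⟨(closure (K i))ᶜ, isClosed_closure.isOpen_compl, ?_, fun z hz => ?_⟩
        · intro hcl
          exact hyf ⟨hcl, by rwa [(hK i).2.1.interior_eq]⟩
        · exact iff_of_false (fun hzK => hz (subset_closure hzK)) hyK
    choose Ni hNo hNy hNiff using hiff
    refine ⟨⋂ i, Ni i, isOpen_iInter_of_finite hNo, Set.mem_iInter.mpr hNy, fun z hz => ?_⟩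
    rw [hsum z, hsum y]
    refine Finset.sum_congr rfl fun i _ => ?_
    have := hNiff i z (Set.mem_iInter.mp hz i)
    by_cases hyK : y ∈ K i
    · rw [Set.indicator_of_mem (this.mpr hyK), Set.indicator_of_mem hyK]
    · rw [Set.indicator_of_notMem (fun h => hyK (this.mp h)),
        Set.indicator_of_notMem hyK]
  -- A is nowhere dense
  have hAnwd : Nwd A := by
    rw [nwd_iff_open_subset]
    intro O hO hsub
    by_contra hne
    rw [← Ne, ← nonempty_iff_ne_empty] at hne
    have hO' : IsOpen (O \ Bd) := hO.sdiff hBdcl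
    have hne' : (O \ Bd).Nonempty := by
      by_contra hc
      rw [Set.not_nonempty_iff_eq_empty, Set.diff_eq_empty] at hc
      rw [nwd_iff_open_subset] at hBdnwd
      exact hne.ne_empty (hBdnwd _ hO (hc.trans subset_closure))
    obtain ⟨y, hyO, hyBd⟩ := hne'
    obtain ⟨N, hNo, hyN, hNconst⟩ := hloc y hyBd
    have hNO : IsOpen (N ∩ (O \ Bd)) := hNo.inter hO'
    obtain ⟨z, ⟨hzN, hzO, _⟩, hzA⟩ := mem_closure_iff.mp (hsub hyO) _ hNO ⟨hyN, hyO, hyBd⟩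
    have hfy : f y ≠ 0 := by rw [← hNconst z hzN]; exact hzA
    have : N ∩ (O \ Bd) ⊆ A := fun w hw => by
      show f w ≠ 0
      rw [hNconst w hw.1]; exact hfy
    have hsubint : N ∩ (O \ Bd) ⊆ interior A := hNO.subset_interior_iff.mpr this
    rw [hint] at hsubint
    exact hsubint ⟨hyN, hyO, hyBd⟩
  -- s-image has empty interior
  have hAsub : A ⊆ ⋃ i, K i := by
    intro g hg
    by_contra hgK
    apply hg
    show f g = 0
    rw [hsum g]
    exact Finset.sum_eq_zero fun i _ =>
      Set.indicator_of_notMem (fun hh => hgK (Set.mem_iUnion.mpr ⟨i, hh⟩)) _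
  have himg : D.s '' A = ⋃ i, D.s '' (A ∩ K i) := by
    apply Set.Subset.antisymm
    · rintro _ ⟨g, hg, rfl⟩
      obtain ⟨i, hi⟩ := Set.mem_iUnion.mp (hAsub hg)
      exact Set.mem_iUnion.mpr ⟨i, g, ⟨hg, hi⟩, rfl⟩
    · exact Set.iUnion_subset fun i => Set.image_mono inter_subset_left
  have : Nwd (D.s '' A) := by
    rw [himg]
    exact Nwd.iUnion_fin _ fun i =>
      nwd_s_image D (hK i).2 inter_subset_right (hAnwd.mono inter_subset_left)
  exact hL f (steinberg_le_ccSpan D hf) this.interior_eq_empty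

end FORWARD

section LIMLEMMA
variable (D : GroupoidData G)

lemma tendsto_zero_of_not_mem [T2Space ↥D.X] {Uj : Set G} (hUj : D.IsOpenBisection Uj)
    {fj : G → ℂ} (hfj : MemCc Uj fj) {c : Set G} (hc : c ⊆ D.s '' Uj) (hcX : c ⊆ D.X)
    {x : G} (hxX : x ∈ D.X) (hxU : x ∉ D.s '' Uj) :
    Tendsto (fun z => fj (GDsec D Uj z)) (𝓝[c] x) (𝓝 0) := by
  rw [Metric.tendsto_nhds]
  intro ε hε
  by_contra hev
  rw [Filter.not_eventually] at hev
  have hNe : ((𝓝[c] x) ⊓ 𝓟 {z | ¬ dist (fj (GDsec D Uj z)) 0 < ε}).NeBot :=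
    frequently_iff_neBot.mp hev
  set ℱ' := (𝓝[c] x) ⊓ 𝓟 {z | ¬ dist (fj (GDsec D Uj z)) 0 < ε} with hℱ'
  obtain ⟨Kj, hKjc, hKjU, hKjsupp⟩ := hfj.2.2
  obtain ⟨u, huo, hue⟩ := continuousOn_iff'.mp hfj.1 (Metric.ball 0 ε) Metric.isOpen_ball
  set KC := Kj ∩ uᶜ with hKC
  have hKCc : IsCompact KC := hKjc.inter_right (isClosed_compl_iff.mpr huo)
  have hKCU : KC ⊆ Uj := fun w hw => hKjU hw.1
  have hmaps : ∀ᶠ z in ℱ', GDsec D Uj z ∈ KC := by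
    have h1 : ∀ᶠ z in ℱ', z ∈ c := by
      apply Filter.mem_of_superset (inter_mem_inf self_mem_nhdsWithin (mem_principal_self _))
      exact fun z hz => hz.1
    have h2 : ∀ᶠ z in ℱ', ¬ dist (fj (GDsec D Uj z)) 0 < ε := by
      apply Filter.mem_of_superset (inter_mem_inf self_mem_nhdsWithin (mem_principal_self _))
      exact fun z hz => hz.2
    filter_upwards [h1, h2] with z hzc hzd
    set w := GDsec D Uj z with hw
    have hwU : w ∈ Uj := (GDsec_spec D (hc hzc)).1
    constructor
    · apply hKjsupp
      intro h0
      apply hzd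
      rw [h0]
      simpa using hε
    · intro hwu
      apply hzd
      have : w ∈ fj ⁻¹' Metric.ball 0 ε ∩ Uj := by
        rw [hue]; exact ⟨hwu, hwU⟩
      simpa [dist_eq_norm] using this.1
  set ℳ := Filter.map (GDsec D Uj) ℱ' with hℳ
  haveI : ℳ.NeBot := hNe.map _
  have hle : ℳ ≤ 𝓟 KC := Filter.le_principal_iff.mpr hmaps
  obtain ⟨k, hkKC, hk⟩ := hKCc.exists_clusterPt hle
  have hmapid : Filter.map D.s ℳ = ℱ' := by
    rw [hℳ, Filter.map_map]
    have : ∀ᶠ z in ℱ', (D.s ∘ GDsec D Uj) z = id z := by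
      apply Filter.mem_of_superset (inter_mem_inf self_mem_nhdsWithin (mem_principal_self _))
      intro z hz
      exact (GDsec_spec D (hc hz.1)).2
    rw [Filter.map_congr this, Filter.map_id]
  have hcl : (𝓝 (D.s k) ⊓ ℱ').NeBot := by
    have h1 : (𝓝 k ⊓ ℳ).NeBot := hk
    have h2 : Filter.map D.s (𝓝 k ⊓ ℳ) ≤ 𝓝 (D.s k) ⊓ ℱ' := by
      refine le_inf ?_ ?_
      · exact ((Filter.map_mono inf_le_left).trans (D.continuous_s.tendsto k))
      · rw [← hmapid]; exact Filter.map_mono inf_le_right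
    exact (h1.map D.s).mono h2
  have hle2 : ℱ' ≤ 𝓝 x ⊓ 𝓟 D.X := by
    refine le_inf (inf_le_left.trans nhdsWithin_le_nhds) ?_
    have h1 : ℱ' ≤ 𝓟 c :=
      inf_le_left.trans (Filter.le_principal_iff.mpr self_mem_nhdsWithin)
    exact h1.trans (Filter.principal_mono.mpr hcX)
  have hXne : (𝓝 (D.s k) ⊓ 𝓝 x ⊓ 𝓟 D.X).NeBot := by
    rw [inf_assoc]
    exact hcl.mono (inf_le_inf_left _ hle2)
  have := GD_eq_of_t2 D (D.s_mem k) hxX hXne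
  apply hxU
  rw [← this]
  exact ⟨k, hKCU hkKC, rfl⟩

end LIMLEMMA

section BACKWARD
variable (D : GroupoidData G)

lemma stable_nbhd {O : Set G} (hO : IsOpen O) {y : G} (hy : y ∉ frontier O) :
    ∃ N, IsOpen N ∧ y ∈ N ∧ ∀ z ∈ N, (z ∈ O ↔ y ∈ O) := by
  by_cases hyO : y ∈ O
  · exact ⟨O, hO, hyO, fun z hz => iff_of_true hz hyO⟩
  · refine ⟨(closure O)ᶜ, isClosed_closure.isOpen_compl, ?_, fun z hz => ?_⟩
    · intro hcl
      exact hy ⟨hcl, by rwa [hO.interior_eq]⟩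
    · exact iff_of_false (fun hzO => hz (subset_closure hzO)) hyO

lemma dir_backward [LocallyCompactSpace G] [T2Space ↥D.X] [TotallyDisconnectedSpace ↥D.X]
    (hXopen : IsOpen D.X)
    (hR : ∀ f : G → ℂ, f ∈ D.Steinberg ℂ → interior {g : G | f g ≠ 0} = ∅ → f = 0)
    (f : G → ℂ) (hf : f ∈ D.CcSpan)
    (hs : interior (D.s '' {g : G | f g ≠ 0}) = ∅) : f = 0 := by
  classical
  obtain ⟨n, U, fi, hUb, hMem, hsum⟩ := ccSpan_rep D hf
  have hfval : ∀ g : G, f g = ∑ i ∈ Finset.univ.filter (fun i => g ∈ U i), fi i g := by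
    intro g
    rw [hsum g]
    symm
    apply Finset.sum_subset (Finset.filter_subset _ _)
    intro i _ hi
    exact (hMem i).2.1 g (by simpa using hi)
  funext g₀
  show f g₀ = 0
  by_contra hfg
  have hex : ∃ i, fi i g₀ ≠ 0 := by
    by_contra hc
    push_neg at hc
    exact hfg (by rw [hsum g₀]; exact Finset.sum_eq_zero fun i _ => hc i)
  obtain ⟨i₀, hi₀⟩ := hex
  have hg₀U : g₀ ∈ U i₀ := by
    by_contra hc
    exact hi₀ ((hMem i₀).2.1 g₀ hc)
  set x := D.s g₀ with hx
  have hxX : x ∈ D.X := D.s_mem g₀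
  set Xi : Fin n → Set G := fun i => D.s '' (U i) with hXi
  set sec : Fin n → G → G := fun i => GDsec D (U i) with hsecdef
  have hXiO : ∀ i, IsOpen (Xi i) := fun i => bis_sImage_open D (hUb i)
  set R : Finset (Fin n) := Finset.univ.filter (fun i => x ∈ Xi i) with hR'
  have hmemR : ∀ i, i ∈ R ↔ x ∈ Xi i := by
    intro i; rw [hR', Finset.mem_filter]; simp
  have hi₀R : i₀ ∈ R := (hmemR i₀).mpr ⟨g₀, hg₀U, rfl⟩
  set CoSet : Fin n → Fin n → Set G := fun i j => D.s '' (U i ∩ U j) with hCoSet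
  have hCoO : ∀ i j, IsOpen (CoSet i j) := fun i j => coSet_open D (hUb i) (hUb j)
  have hCoMem : ∀ i j (z : G), z ∈ CoSet i j ↔
      z ∈ Xi i ∧ z ∈ Xi j ∧ sec i z = sec j z := fun i j z =>
    mem_coSet_iff D (hUb i) (hUb j)
  set V₀ : Set G := ⋂ i ∈ R, Xi i with hV₀
  have hV₀O : IsOpen V₀ := isOpen_biInter_finset fun i _ => hXiO i
  have hV₀P1 : ∀ z ∈ V₀, ∀ i ∈ R, z ∈ Xi i := by
    intro z hz i hi
    exact Set.mem_iInter₂.mp hz i hi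
  have hxV₀ : x ∈ V₀ := Set.mem_iInter₂.mpr fun i hi => (hmemR i).mp hi
  have hV₀X : V₀ ⊆ D.X := by
    intro z hz
    obtain ⟨g, _, rfl⟩ := hV₀P1 z hz i₀ hi₀R
    exact D.s_mem g
  -- stable points
  set NwdS : Set G := (⋃ i, frontier (Xi i)) ∪ ⋃ p : Fin n × Fin n, frontier (CoSet p.1 p.2)
    with hNwdS
  set Stb : Set G := NwdSᶜ with hStb
  have hNwdScl : IsClosed NwdS :=
    (isClosed_iUnion_of_finite fun i => isClosed_frontier).union
      (isClosed_iUnion_of_finite fun p => isClosed_frontier)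
  have hNwdSnwd : Nwd NwdS :=
    (Nwd.iUnion_fin _ fun i => nwd_frontier_of_open (hXiO i)).union
      (Nwd.iUnion_fin _ fun p => nwd_frontier_of_open (hCoO p.1 p.2))
  have hStbO : IsOpen Stb := hNwdScl.isOpen_compl
  have hstabN : ∀ y ∈ Stb, ∃ N : Set G, IsOpen N ∧ y ∈ N ∧ ∀ z ∈ N,
      (∀ i, z ∈ Xi i ↔ y ∈ Xi i) ∧
      (∀ p : Fin n × Fin n, z ∈ CoSet p.1 p.2 ↔ y ∈ CoSet p.1 p.2) := by
    intro y hy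
    have h1 : ∀ i : Fin n, ∃ N, IsOpen N ∧ y ∈ N ∧ ∀ z ∈ N, (z ∈ Xi i ↔ y ∈ Xi i) := by
      intro i
      refine stable_nbhd (hXiO i) fun hfr => hy ?_
      exact Or.inl (Set.mem_iUnion.mpr ⟨i, hfr⟩)
    have h2 : ∀ p : Fin n × Fin n, ∃ N, IsOpen N ∧ y ∈ N ∧ ∀ z ∈ N,
        (z ∈ CoSet p.1 p.2 ↔ y ∈ CoSet p.1 p.2) := by
      intro p
      refine stable_nbhd (hCoO p.1 p.2) fun hfr => hy ?_
      exact Or.inr (Set.mem_iUnion.mpr ⟨p, hfr⟩)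
    choose N1 hN1o hN1y hN1 using h1
    choose N2 hN2o hN2y hN2 using h2
    refine ⟨(⋂ i, N1 i) ∩ ⋂ p, N2 p,
      (isOpen_iInter_of_finite hN1o).inter (isOpen_iInter_of_finite hN2o),
      ⟨Set.mem_iInter.mpr hN1y, Set.mem_iInter.mpr hN2y⟩, fun z hz => ?_⟩
    exact ⟨fun i => hN1 i z (Set.mem_iInter.mp hz.1 i),
      fun p => hN2 p z (Set.mem_iInter.mp hz.2 p)⟩
  -- cells
  set cell : Set (Fin n) → Set (Fin n × Fin n) → Set G := fun A P =>
    {z | z ∈ V₀ ∧ z ∈ Stb ∧ (∀ i, z ∈ Xi i ↔ i ∈ A) ∧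
      (∀ p : Fin n × Fin n, z ∈ CoSet p.1 p.2 ↔ p ∈ P)} with hcell
  have hcellO : ∀ A P, IsOpen (cell A P) := by
    intro A P
    rw [isOpen_iff_forall_mem_open]
    intro z hz
    obtain ⟨N, hNo, hzN, hN⟩ := hstabN z hz.2.1
    refine ⟨N ∩ V₀ ∩ Stb, ?_, (hNo.inter hV₀O).inter hStbO, ⟨⟨hzN, hz.1⟩, hz.2.1⟩⟩
    rintro w ⟨⟨hwN, hwV₀⟩, hwStb⟩
    refine ⟨hwV₀, hwStb, fun i => ?_, fun p => ?_⟩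
    · rw [(hN w hwN).1 i]; exact hz.2.2.1 i
    · rw [(hN w hwN).2 p]; exact hz.2.2.2 p
  -- shrink around x
  set V' : Set G := V₀ \ ⋃ q ∈ {q : Set (Fin n) × Set (Fin n × Fin n) |
      x ∉ closure (cell q.1 q.2)}, closure (cell q.1 q.2) with hV'
  have hV'O : IsOpen V' :=
    hV₀O.sdiff (Set.Finite.isClosed_biUnion (Set.toFinite _) fun q _ => isClosed_closure)
  have hxV' : x ∈ V' := by
    refine ⟨hxV₀, fun hmem => ?_⟩
    obtain ⟨q, hq1, hq2⟩ := Set.mem_iUnion₂.mp hmem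
    exact hq1 hq2
  have hV'V₀ : V' ⊆ V₀ := fun z hz => hz.1
  have hadh : ∀ y ∈ V', y ∈ Stb →
      x ∈ closure (cell {i | y ∈ Xi i} {p | y ∈ CoSet p.1 p.2}) := by
    intro y hyV' hySt
    by_contra hnot
    apply hyV'.2
    apply Set.mem_iUnion₂.mpr
    refine ⟨({i | y ∈ Xi i}, {p | y ∈ CoSet p.1 p.2}), hnot, subset_closure ?_⟩
    exact ⟨hyV'.1, hySt, fun i => Iff.rfl, fun p => Iff.rfl⟩
  -- compact open neighborhood
  obtain ⟨K, hKc, hKo, hxK, hKV'⟩ := GD_exists_compact_open D hXopen hV'O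
    (hV'V₀.trans hV₀X) hxV'
  have hKV₀ : K ⊆ V₀ := hKV'.trans hV'V₀
  -- the Steinberg witness
  set d : Fin n → ℂ := fun i => fi i (sec i x) with hd
  set W : Fin n → Set G := fun i => U i ∩ D.s ⁻¹' K with hW
  have hKXi : ∀ i ∈ R, K ⊆ Xi i := fun i hi z hz => hV₀P1 z (hKV₀ hz) i hi
  have hWsec : ∀ i ∈ R, W i = GDsec D (U i) '' K := by
    intro i hi
    rw [GDsec_image D (hUb i) (hKXi i hi)]
  have hWo : ∀ i, IsOpen (W i) := fun i =>
    ((hUb i).1).inter (hKo.preimage D.continuous_s)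
  have hWc : ∀ i ∈ R, IsCompact (W i) := by
    intro i hi
    rw [hWsec i hi]
    exact hKc.image_of_continuousOn ((GDsec_continuousOn D (hUb i)).mono (hKXi i hi))
  have hWb : ∀ i, D.IsOpenBisection (W i) :=
    fun i => bis_sub D (hUb i) inter_subset_left (hWo i)
  set h : G → ℂ := ∑ i ∈ R, Set.indicator (W i) (fun _ => d i) with hh
  have hhSt : h ∈ D.Steinberg ℂ :=
    AddSubgroup.sum_mem _ fun i hi =>
      AddSubgroup.subset_closure ⟨d i, W i, hWc i hi, hWb i, rfl⟩
  have happly : ∀ g : G, h g = ∑ i ∈ R.filter (fun i => g ∈ W i), d i := by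
    intro g
    rw [hh, Finset.sum_apply]
    calc ∑ i ∈ R, Set.indicator (W i) (fun _ => d i) g
        = ∑ i ∈ R, if g ∈ W i then d i else 0 := by
          refine Finset.sum_congr rfl fun i _ => ?_
          by_cases hg : g ∈ W i <;> simp [Set.indicator_apply, hg]
      _ = ∑ i ∈ R.filter (fun i => g ∈ W i), d i := (Finset.sum_filter _ _).symm
  -- membership characterizations
  have hWmem : ∀ (i : Fin n) (g : G), D.s g ∈ K → (g ∈ W i ↔ g ∈ U i) := by
    intro i g hgK
    exact ⟨fun hg => hg.1, fun hg => ⟨hg, hgK⟩⟩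
  have hUsec : ∀ (i : Fin n) {g : G}, g ∈ U i → sec i (D.s g) = g :=
    fun i g hg => GDsec_of_mem D (bis_injOn_s D (hUb i)) hg
  -- THE KEY RELATION
  have key : ∀ y, y ∈ K → y ∈ Stb → ∀ ii , ii ∈ R → y ∈ Xi ii →
      ∑ i ∈ R.filter (fun i => y ∈ Xi i ∧ sec i y = sec ii y), d i = 0 := by
    intro y hyK hySt ii hiiR hyXii
    have hyV' : y ∈ V' := hKV' hyK
    have hyV₀ : y ∈ V₀ := hyV'.1
    set c : Set G := cell {i | y ∈ Xi i} {p | y ∈ CoSet p.1 p.2} with hc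
    have hyc : y ∈ c := ⟨hyV₀, hySt, fun i => Iff.rfl, fun p => Iff.rfl⟩
    have hxcl : x ∈ closure c := hadh y hyV' hySt
    haveI hNe : (𝓝[c] x).NeBot := mem_closure_iff_nhdsWithin_neBot.mp hxcl
    have hcXi : ∀ z ∈ c, ∀ i, (z ∈ Xi i ↔ y ∈ Xi i) := fun z hz i => hz.2.2.1 i
    have hcCo : ∀ z ∈ c, ∀ i j, (z ∈ CoSet i j ↔ y ∈ CoSet i j) := fun z hz i j =>
      hz.2.2.2 (i, j)
    set Tb : Finset (Fin n) :=
      Finset.univ.filter (fun j => y ∈ Xi j ∧ sec j y = sec ii y) with hTb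
    have hTbmem : ∀ j, j ∈ Tb ↔ (y ∈ Xi j ∧ sec j y = sec ii y) := by
      intro j; rw [hTb, Finset.mem_filter]; simp
    have hblock : ∀ z ∈ c, ∀ j, (j ∈ Tb ↔ (z ∈ Xi j ∧ sec j z = sec ii z)) := by
      intro z hz j
      rw [hTbmem]
      constructor
      · rintro ⟨hyXj, hsecj⟩
        have hyCo : y ∈ CoSet j ii := (hCoMem j ii y).mpr ⟨hyXj, hyXii, hsecj⟩
        have hzCo : z ∈ CoSet j ii := (hcCo z hz j ii).mpr hyCo
        have h3 := (hCoMem j ii z).mp hzCo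
        exact ⟨h3.1, h3.2.2⟩
      · rintro ⟨hzXj, hsecj⟩
        have hzXii : z ∈ Xi ii := (hcXi z hz ii).mpr hyXii
        have hzCo : z ∈ CoSet j ii := (hCoMem j ii z).mpr ⟨hzXj, hzXii, hsecj⟩
        have hyCo : y ∈ CoSet j ii := (hcCo z hz j ii).mp hzCo
        have h3 := (hCoMem j ii y).mp hyCo
        exact ⟨h3.1, h3.2.2⟩
    have hcXisub : ∀ j ∈ Tb, c ⊆ Xi j := fun j hj z hz =>
      (hcXi z hz j).mpr ((hTbmem j).mp hj).1
    have hcXiisub : c ⊆ Xi ii := fun z hz => (hcXi z hz ii).mpr hyXii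
    have hcXsub : c ⊆ D.X := fun z hz => hV₀X hz.1
    set ψ : G → ℂ := fun z => ∑ j ∈ Tb, fi j (sec j z) with hψ
    have hψf : ∀ z ∈ c, ψ z = f (sec ii z) := by
      intro z hz
      have hzXii : z ∈ Xi ii := hcXiisub hz
      have hwU : sec ii z ∈ U ii := (GDsec_spec D hzXii).1
      have hsw : D.s (sec ii z) = z := (GDsec_spec D hzXii).2
      rw [hfval (sec ii z)]
      have hset : Finset.univ.filter (fun j => sec ii z ∈ U j) = Tb := by
        ext j
        simp only [Finset.mem_filter, Finset.mem_univ, true_and]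
        rw [hblock z hz j]
        constructor
        · intro hwUj
          refine ⟨by rw [← hsw]; exact ⟨sec ii z, hwUj, rfl⟩, ?_⟩
          have h6 := hUsec j hwUj
          rwa [hsw] at h6
        · rintro ⟨hzXj, hsecj⟩
          have h4 : sec j z ∈ U j := (GDsec_spec D hzXj).1
          rwa [hsecj] at h4
      rw [hset]
      refine Finset.sum_congr rfl fun j hj => ?_
      rw [((hblock z hz j).mp hj).2]
    have hψ0 : ∀ z ∈ c, ψ z = 0 := by
      have hcO : IsOpen c := hcellO _ _
      have hψcont : ContinuousOn ψ c := by
        apply continuousOn_finset_sum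
        intro j hj
        exact (hMem j).1.comp ((GDsec_continuousOn D (hUb j)).mono (hcXisub j hj))
          (fun z hz => (GDsec_spec D (hcXisub j hj hz)).1)
      have hdense : Dense ((D.s '' {g : G | f g ≠ 0})ᶜ) :=
        interior_eq_empty_iff_dense_compl.mp hs
      apply eqzero_of_dense hcO hψcont hdense
      intro z hz
      rw [hψf z hz.1]
      by_contra hne
      exact hz.2 ⟨sec ii z, hne, (GDsec_spec D (hcXiisub hz.1)).2⟩
    set T : Finset (Fin n) := Tb.filter (fun j => j ∈ R) with hT
    have hTgoal : R.filter (fun i => y ∈ Xi i ∧ sec i y = sec ii y) = T := by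
      ext j
      rw [hT, hTb]
      simp only [Finset.mem_filter, Finset.mem_univ, true_and]
      tauto
    have t1 : Tendsto (fun z => ∑ j ∈ T, fi j (sec j z)) (𝓝[c] x)
        (𝓝 (∑ j ∈ T, fi j (sec j x))) := by
      apply tendsto_finset_sum
      intro j hj
      rw [hT, Finset.mem_filter] at hj
      have hxXj : x ∈ Xi j := (hmemR j).mp hj.2
      have hco : ContinuousOn (fun z => fi j (sec j z)) (Xi j) :=
        (hMem j).1.comp (GDsec_continuousOn D (hUb j)) (fun z hz => (GDsec_spec D hz).1)
      exact (hco x hxXj).mono (hcXisub j hj.1)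
    have t2 : Tendsto (fun z => ∑ j ∈ Tb.filter (fun j => ¬ j ∈ R), fi j (sec j z))
        (𝓝[c] x) (𝓝 0) := by
      have h5 : Tendsto (fun z => ∑ j ∈ Tb.filter (fun j => ¬ j ∈ R), fi j (sec j z))
          (𝓝[c] x) (𝓝 (∑ _j ∈ Tb.filter (fun j => ¬ j ∈ R), (0 : ℂ))) := by
        apply tendsto_finset_sum
        intro j hj
        rw [Finset.mem_filter] at hj
        have hxU : x ∉ Xi j := fun hmem => hj.2 ((hmemR j).mpr hmem)
        exact tendsto_zero_of_not_mem D (hUb j) (hMem j) (hcXisub j hj.1) hcXsub hxX hxU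
      simpa using h5
    have tψ : Tendsto ψ (𝓝[c] x) (𝓝 (∑ j ∈ T, fi j (sec j x))) := by
      have hsplit : ∀ z : G, (∑ j ∈ T, fi j (sec j z)) +
          (∑ j ∈ Tb.filter (fun j => ¬ j ∈ R), fi j (sec j z)) = ψ z := by
        intro z
        rw [hψ, hT]
        exact Finset.sum_filter_add_sum_filter_not Tb (fun j => j ∈ R) _
      have := t1.add t2
      rw [add_zero] at this
      exact Tendsto.congr hsplit this
    have tψ0 : Tendsto ψ (𝓝[c] x) (𝓝 0) := by
      apply Tendsto.congr' _ tendsto_const_nhds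
      filter_upwards [self_mem_nhdsWithin] with z hz
      exact (hψ0 z hz).symm
    have hfin : ∑ j ∈ T, fi j (sec j x) = 0 := tendsto_nhds_unique tψ tψ0
    rw [hTgoal]
    exact hfin

  -- support of h is nowhere dense
  have hsupp : {g : G | h g ≠ 0} ⊆ ⋃ i, GDsec D (U i) '' ((K ∩ Xi i) \ Stb) := by
    intro g' hg'
    have hne : (R.filter (fun i => g' ∈ W i)).Nonempty := by
      by_contra hc
      rw [Finset.not_nonempty_iff_eq_empty] at hc
      exact hg' (by rw [happly g', hc, Finset.sum_empty])
    obtain ⟨ii, hii⟩ := hne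
    rw [Finset.mem_filter] at hii
    have hyK : D.s g' ∈ K := hii.2.2
    set y := D.s g' with hy
    have hg'U : g' ∈ U ii := hii.2.1
    have hyXii : y ∈ Xi ii := ⟨g', hg'U, rfl⟩
    have hsecii : sec ii y = g' := hUsec ii hg'U
    by_cases hySt : y ∈ Stb
    · exfalso
      apply hg'
      rw [happly g']
      have : R.filter (fun i => g' ∈ W i) =
          R.filter (fun i => y ∈ Xi i ∧ sec i y = sec ii y) := by
        apply Finset.filter_congr
        intro i hiR
        rw [hWmem i g' hyK]
        constructor
        · intro hgU
          refine ⟨⟨g', hgU, rfl⟩, ?_⟩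
          show sec i (D.s g') = sec ii y
          rw [hUsec i hgU, hsecii]
        · rintro ⟨hyXi, hseq⟩
          have h1 : sec i y ∈ U i := (GDsec_spec D hyXi).1
          rwa [hseq, hsecii] at h1
      rw [this]
      exact key y hyK hySt ii hii.1 hyXii
    · apply Set.mem_iUnion.mpr ⟨ii, ?_⟩
      refine ⟨y, ⟨⟨hyK, hyXii⟩, hySt⟩, hsecii⟩
  have hnwd : interior {g : G | h g ≠ 0} = ∅ := by
    have hnwdU : Nwd (⋃ i, GDsec D (U i) '' ((K ∩ Xi i) \ Stb)) := by
      apply Nwd.iUnion_fin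
      intro i
      set B := (K ∩ Xi i) \ Stb with hB
      have hBXi : B ⊆ Xi i := fun z hz => hz.1.2
      have hBnwd : Nwd B := hNwdSnwd.mono (by
        intro z hz
        have := hz.2
        rw [hStb, Set.notMem_compl_iff] at this
        exact this)
      have hAU : GDsec D (U i) '' B ⊆ U i := by
        rintro _ ⟨z, hz, rfl⟩
        exact (GDsec_spec D (hBXi hz)).1
      apply nwd_of_s_image D (hUb i) hAU
      have : D.s '' (GDsec D (U i) '' B) = B := by
        apply Set.Subset.antisymm
        · rintro _ ⟨_, ⟨z, hz, rfl⟩, rfl⟩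
          rw [(GDsec_spec D (hBXi hz)).2]
          exact hz
        · intro z hz
          exact ⟨GDsec D (U i) z, ⟨z, hz, rfl⟩, (GDsec_spec D (hBXi hz)).2⟩
      rw [this]
      exact hBnwd
    have h1 : {g : G | h g ≠ 0} ⊆ closure (⋃ i, GDsec D (U i) '' ((K ∩ Xi i) \ Stb)) :=
      hsupp.trans subset_closure
    have h2 := interior_mono h1
    rw [hnwdU] at h2
    exact eq_empty_of_subset_empty h2
  have hh0 : h = 0 := hR h hhSt hnwd
  -- evaluate at g₀
  apply hfg
  have : h g₀ = f g₀ := by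
    rw [happly g₀]
    have he1 : R.filter (fun i => g₀ ∈ W i) = Finset.univ.filter (fun i => g₀ ∈ U i) := by
      ext i
      simp only [Finset.mem_filter, Finset.mem_univ, true_and]
      constructor
      · intro hi
        exact ((hWmem i g₀ (hx ▸ hxK)).mp hi.2)
      · intro hi
        exact ⟨(hmemR i).mpr ⟨g₀, hi, rfl⟩, (hWmem i g₀ (hx ▸ hxK)).mpr hi⟩
    rw [he1, hfval g₀]
    refine Finset.sum_congr rfl fun i hi => ?_
    rw [Finset.mem_filter] at hi
    show fi i (sec i (D.s g₀)) = fi i g₀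
    rw [hUsec i hi.2]
  rw [← this, hh0]
  rfl
end BACKWARD

-- INSERT8

/-- Let `G` be a non-Hausdorff ample groupoid.  Then `J ∩ 𝒞_c(G) = {0}`
(where `J` is the singular ideal of `C*_r(G)`, so an element `f ∈ 𝒞_c(G)` lies in `J` iff
`s(supp°(f))` has empty interior) if and only if `J_ℂ = {0}` (the singular ideal of the complex
Steinberg algebra `ℂG`, whose elements are those `f ∈ ℂG` with `supp°(f)` of empty interior). -/
theorem stmt15 [LocallyCompactSpace G] (D : GroupoidData G) [T2Space ↥D.X]
    [TotallyDisconnectedSpace ↥D.X] (hXopen : IsOpen D.X) (hetale : D.IsEtale)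
    (hnH : ¬ T2Space G) :
    (∀ f : G → ℂ, f ∈ D.CcSpan → interior (D.s '' {g : G | f g ≠ 0}) = ∅ → f = 0) ↔
      (∀ f : G → ℂ, f ∈ D.Steinberg ℂ → interior {g : G | f g ≠ 0} = ∅ → f = 0) := by
  constructor
  · intro hL f hf hint
    exact dir_forward D hL f hf hint
  · intro hR f hf hs
    exact dir_backward D hXopen hR f hf hs
end

section
/- Let A be a commutative C*-algebra containing a dense *-subalgebra that is the linear span of a set of projections. Then the Gelfand spectrum of A is totally disconnected. -/
/-- Let `A` be a (not necessarily unital) commutative C*-algebra containing a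
dense *-subalgebra which is the linear span of a set `P` of projections.  Then the Gelfand
spectrum of `A` (the character space, i.e. the space of nonzero characters, so that
`A ≅ C₀(spectrum)`) is totally disconnected. -/
theorem stmt18 (A : Type) [NonUnitalNormedCommRing A] [StarRing A] [CStarRing A]
    [NormedSpace ℂ A] [IsScalarTower ℂ A A] [SMulCommClass ℂ A A] [StarModule ℂ A]
    [CompleteSpace A]
    (P : Set A) (hsa : ∀ p ∈ P, star p = p) (hidem : ∀ p ∈ P, p * p = p)
    (hmul : ∀ x ∈ Submodule.span ℂ P, ∀ y ∈ Submodule.span ℂ P,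
      x * y ∈ Submodule.span ℂ P)
    (hstar : ∀ x ∈ Submodule.span ℂ P, star x ∈ Submodule.span ℂ P)
    (hdense : Dense (Submodule.span ℂ P : Set A)) :
    TotallyDisconnectedSpace (WeakDual.characterSpace ℂ A) := by
  constructor
  intro t _ ht φ hφ ψ hψ
  haveI : Finite ({0, 1} : Set ℂ) := Set.Finite.to_subtype (by simp)
  -- characters agree on projections
  have key : ∀ p ∈ P, φ p = ψ p := by
    intro p hp
    have hcont : Continuous fun χ : WeakDual.characterSpace ℂ A => χ p := by
      exact (WeakDual.eval_continuous p).comp continuous_subtype_val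
    refine ht.constant_of_mapsTo (T := ({0, 1} : Set ℂ)) (isDiscrete_iff_discreteTopology.mpr inferInstance) hcont.continuousOn ?_ hφ hψ
    intro χ hχ
    have h1 : χ p * χ p = χ p := by rw [← map_mul, hidem p hp]
    have : χ p * (χ p - 1) = 0 := by ring_nf; linear_combination h1
    rcases mul_eq_zero.mp this with h | h
    · exact Or.inl h
    · exact Or.inr (sub_eq_zero.mp h)
  -- agree on the span
  have key2 : ∀ x ∈ Submodule.span ℂ P, φ x = ψ x := by
    intro x hx
    induction hx using Submodule.span_induction with
    | mem x hx => exact key x hx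
    | zero => simp
    | add x y _ _ hx hy => simp [map_add, hx, hy]
    | smul c x _ hx => simp [map_smul, hx]
  -- agree everywhere by density
  have : (φ : WeakDual ℂ A) = (ψ : WeakDual ℂ A) := by
    apply ContinuousLinearMap.coe_injective
    apply LinearMap.ext
    intro x
    have := Continuous.ext_on hdense (φ : WeakDual ℂ A).cont (ψ : WeakDual ℂ A).cont key2
    exact congrFun this x
  exact Subtype.ext this
end
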